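/- arXiv:1204.3485 — 9 statements merged into one kernel-verified Lean document; each statement's English description precedes it below -/
import Mathlib

section
/- Every surjective continuous function f : X → Y between compact Polish spaces has a Borel section, i.e., there exists a Borel function g : Y → X with f ∘ g = id_Y. -/
/-!
Pick continuous `e n : X → ℝ` separating points, so that `x ↦ (e n x)ₙ` is a closed embedding
of `X` into `ℕ → ℝ`. Over each `y`, choose a point of the fibre at which `(e n x)ₙ` is
lexicographically minimal: minimise `e 0` on the fibre, then `e 1` on the minimisers, and so on;
compactness keeps these nested sets nonempty. The chosen point is sent by the embedding to the
sequence of successive minima, whose `n`-th term is the minimum of `e n` on the fibre of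
`x ↦ (f x, e 0 x, …, e (n-1) x)` over a point depending measurably on `y` (by induction on `n`).
Such fibrewise minima are Borel, as `{z | min ≤ t}` is the image of a compact set.
-/

open Set Topology

section FiberInf

variable {X Z : Type*} [TopologicalSpace X] [CompactSpace X] [TopologicalSpace Z]
  {F : X → Z} {u : X → ℝ}

lemma sInf_image_fiber_le_iff [T1Space Z] (hF : Continuous F) (hu : Continuous u) {z : Z}
    (hz : z ∈ range F) (t : ℝ) :
    sInf (u '' (F ⁻¹' {z})) ≤ t ↔ z ∈ F '' {x | u x ≤ t} := by
  have hfiber : IsCompact (F ⁻¹' {z}) := (isClosed_singleton.preimage hF).isCompact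
  obtain ⟨⟨x₀, hx₀, hx₀_min⟩, hlower⟩ := (hfiber.image hu).isLeast_sInf (Nonempty.image u hz)
  constructor
  · exact fun h => ⟨x₀, hx₀_min.trans_le h, hx₀⟩
  · rintro ⟨x, hxt, hx⟩
    exact (hlower ⟨x, hx, rfl⟩).trans hxt

lemma measurable_sInf_image_fiber [T2Space Z] [MeasurableSpace Z] [OpensMeasurableSpace Z]
    (hF : Continuous F) (hu : Continuous u) :
    Measurable fun z => sInf (u '' (F ⁻¹' {z})) := by
  refine measurable_of_Iic fun t => ?_
  -- off the range of `F` the fibre is empty and `sInf ∅ = 0`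
  have hpreimage : (fun z => sInf (u '' (F ⁻¹' {z}))) ⁻¹' Iic t =
      F '' {x | u x ≤ t} ∪ (range F)ᶜ ∩ {_z | 0 ≤ t} := by
    ext z
    by_cases hz : z ∈ range F
    · simp [sInf_image_fiber_le_iff hF hu hz, hz]
    · have hz' : z ∉ F '' {x | u x ≤ t} := fun h => hz (image_subset_range _ _ h)
      simp [preimage_singleton_eq_empty.mpr hz, hz, hz']
  rw [hpreimage]
  refine MeasurableSet.union ?_ (MeasurableSet.inter ?_ (MeasurableSet.const _))
  · exact ((isClosed_le hu continuous_const).isCompact.image hF).isClosed.measurableSet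
  · exact (isCompact_range hF).isClosed.measurableSet.compl

end FiberInf

noncomputable section LexMin

variable {X Y : Type*} (f : X → Y) (e : ℕ → X → ℝ)

def lexFiber : ℕ → Y → Set X
  | 0, y => f ⁻¹' {y}
  | n + 1, y => lexFiber n y ∩ e n ⁻¹' {sInf (e n '' lexFiber n y)}

def lexMin (n : ℕ) (y : Y) : ℝ := sInf (e n '' lexFiber f e n y)

variable {f e}

lemma lexFiber_succ (n : ℕ) (y : Y) :
    lexFiber f e (n + 1) y = lexFiber f e n y ∩ e n ⁻¹' {lexMin f e n y} :=
  rfl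

lemma lexFiber_eq (n : ℕ) (y : Y) :
    lexFiber f e n y = {x | f x = y ∧ ∀ i < n, e i x = lexMin f e i y} := by
  induction n with
  | zero => ext; simp [lexFiber]
  | succ n ih =>
    ext x
    rw [lexFiber_succ, ih]
    simp only [mem_inter_iff, mem_ofPred_eq, mem_preimage, mem_singleton_iff,
      Nat.forall_lt_succ_right, and_assoc]

variable [TopologicalSpace X] [TopologicalSpace Y]

lemma isClosed_lexFiber [T1Space Y] (hf : Continuous f) (he : ∀ n, Continuous (e n)) :
    ∀ n y, IsClosed (lexFiber f e n y)
  | 0, _ => isClosed_singleton.preimage hf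
  | n + 1, y => (isClosed_lexFiber hf he n y).inter (isClosed_singleton.preimage (he n))

variable [CompactSpace X]

lemma lexFiber_nonempty [T1Space Y] (hf : Continuous f) (hsurj : Function.Surjective f)
    (he : ∀ n, Continuous (e n)) : ∀ n y, (lexFiber f e n y).Nonempty
  | 0, y => hsurj y
  | n + 1, y => by
    obtain ⟨x, hx, hx_min⟩ := ((isClosed_lexFiber hf he n y).isCompact.image (he n)).sInf_mem
      ((lexFiber_nonempty hf hsurj he n y).image _)
    exact ⟨x, hx, hx_min⟩

lemma measurable_lexMin [T2Space Y] [MeasurableSpace Y] [OpensMeasurableSpace Y]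
    (hf : Continuous f) (he : ∀ n, Continuous (e n)) (n : ℕ) : Measurable (lexMin f e n) := by
  induction n using Nat.strong_induction_on with
  | _ n ih =>
    let F : X → Y × (Fin n → ℝ) := fun x => (f x, fun i => e i x)
    have hF : Continuous F := hf.prodMk (continuous_pi fun i => he i)
    have hlexMin : lexMin f e n =
        fun y => sInf (e n '' (F ⁻¹' {(y, fun i : Fin n => lexMin f e i y)})) := by
      ext y
      rw [lexMin, lexFiber_eq]
      congr 2
      ext x
      simp [F, funext_iff, Fin.forall_iff]
    rw [hlexMin]
    exact (measurable_sInf_image_fiber hF (he n)).comp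
      (measurable_id.prodMk (measurable_pi_lambda _ fun i => ih i i.2))

theorem exists_measurable_section_of_separating [MeasurableSpace X] [BorelSpace X]
    [T2Space Y] [MeasurableSpace Y] [OpensMeasurableSpace Y]
    (hf : Continuous f) (hsurj : Function.Surjective f) (he : ∀ n, Continuous (e n))
    (hsep : Function.Injective fun x n => e n x) :
    ∃ g : Y → X, Measurable g ∧ f ∘ g = id := by
  have hlim (y : Y) : (⋂ n, lexFiber f e n y).Nonempty :=
    IsCompact.nonempty_iInter_of_sequence_nonempty_isCompact_isClosed _
      (fun _ => inter_subset_left) (fun n => lexFiber_nonempty hf hsurj he n y)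
      (isClosed_lexFiber hf he 0 y).isCompact (fun n => isClosed_lexFiber hf he n y)
  choose g hg using hlim
  have hg_mem (y : Y) (n : ℕ) : g y ∈ lexFiber f e n y := mem_iInter.mp (hg y) n
  have hE : MeasurableEmbedding fun x n => e n x :=
    ((continuous_pi he).isClosedEmbedding hsep).measurableEmbedding
  have hEg : (fun x n => e n x) ∘ g = fun y n => lexMin f e n y :=
    funext fun y => funext fun n => (hg_mem y (n + 1)).2
  refine ⟨g, ?_, funext fun y => hg_mem y 0⟩
  rw [← hE.measurable_comp_iff, hEg]
  exact measurable_pi_lambda _ (measurable_lexMin hf he)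

end LexMin

theorem stmt1_general {X Y : Type*} [TopologicalSpace X] [PolishSpace X] [CompactSpace X]
    [MeasurableSpace X] [BorelSpace X]
    [TopologicalSpace Y] [PolishSpace Y]
    [MeasurableSpace Y] [BorelSpace Y]
    (f : X → Y) (hf : Continuous f) (hsurj : Function.Surjective f) :
    ∃ g : Y → X, Measurable g ∧ f ∘ g = id := by
  obtain ⟨E, hE⟩ := TopologicalSpace.exists_isInducing_l_infty X
  exact exists_measurable_section_of_separating hf hsurj
    (fun n => (continuous_apply n).comp
      (BoundedContinuousFunction.continuous_coe.comp hE.continuous))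
    (fun x x' h => hE.injective (BoundedContinuousFunction.ext (congrFun h)))

/-- Every surjective continuous function between compact Polish spaces
has a Borel section. -/
theorem stmt1 {X Y : Type*} [TopologicalSpace X] [PolishSpace X] [CompactSpace X]
    [MeasurableSpace X] [BorelSpace X]
    [TopologicalSpace Y] [PolishSpace Y] [CompactSpace Y]
    [MeasurableSpace Y] [BorelSpace Y]
    (f : X → Y) (hf : Continuous f) (hsurj : Function.Surjective f) :
    ∃ g : Y → X, Measurable g ∧ f ∘ g = id :=
  stmt1_general f hf hsurj
end

section
/- Let ρ : ℕ → ℕ be a function such that ρ⁻¹(n) is infinite for every n. Then the continuous map f : ℝ^ℕ → (S¹)^ℕ given by f((t_m)_m) = (exp(2πi · t_{ρ(n)}/n))_n is a Borel (indeed continuous) reduction of the equivalence relation ℓ∞ (where x ℓ∞ y iff sup_m |x(m) − y(m)| < ∞) to the equivalence relation E on (S¹)^ℕ given by (x_n) E (y_n) iff there exists k such that for all n ≥ 1 the arc distance between x_n and y_n is at most 2πk/n. -/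
open scoped Real

instance : Fact (0 < 2 * π) := ⟨by positivity⟩

/-!
The n-th coordinate of f(x) and f(y) differ by the real number 2π (x_{ρ n} - y_{ρ n}) / n,
so their arc distance is at most 2π |x_{ρ n} - y_{ρ n}| / n, with equality as soon as this
is at most π. The first bound turns a uniform bound k on |x - y| into E with constant ⌈k⌉.
Conversely, each m has preimages n under ρ with n ≥ 2 |x_m - y_m|, and for such n the
equality case turns the bound 2πk/n from E into |x_m - y_m| ≤ k.
-/

namespace AddCircle

variable (p : ℝ)

theorem dist_coe_le_abs_sub (a b : ℝ) : dist (a : AddCircle p) b ≤ |a - b| := by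
  rw [dist_eq_norm, ← coe_sub]
  simpa using QuotientAddGroup.norm_mk_le_norm (S := AddSubgroup.zmultiples p) (m := a - b)

theorem dist_coe_eq_abs_sub {a b : ℝ} (hp : p ≠ 0) (h : |a - b| ≤ |p| / 2) :
    dist (a : AddCircle p) b = |a - b| := by
  rw [dist_eq_norm, ← coe_sub, norm_coe_eq_abs_iff p hp]
  exact h

variable {p}

theorem dist_coe_mul_div_le (hp : 0 ≤ p) (a b : ℝ) {n : ℝ} (hn : 0 ≤ n) :
    dist ((p * a / n : ℝ) : AddCircle p) ((p * b / n : ℝ) : AddCircle p) ≤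
      p * |a - b| / n := by
  calc _ ≤ |p * a / n - p * b / n| := dist_coe_le_abs_sub p _ _
    _ = p * |a - b| / n := by
      rw [← sub_div, ← mul_sub, abs_div, abs_mul, abs_of_nonneg hp, abs_of_nonneg hn]

theorem dist_coe_mul_div_eq (hp : 0 < p) {a b n : ℝ} (hn : 0 < n) (hab : 2 * |a - b| ≤ n) :
    dist ((p * a / n : ℝ) : AddCircle p) ((p * b / n : ℝ) : AddCircle p) = p * |a - b| / n := by
  have habs : |p * a / n - p * b / n| = p * |a - b| / n := by
    rw [← sub_div, ← mul_sub, abs_div, abs_mul, abs_of_pos hp, abs_of_pos hn]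
  have hhalf : |p * a / n - p * b / n| ≤ |p| / 2 := by
    rw [habs, abs_of_pos hp, div_le_div_iff₀ hn two_pos]
    nlinarith
  rw [dist_coe_eq_abs_sub p hp.ne' hhalf, habs]

end AddCircle

/-- If ρ : ℕ → ℕ has all fibers infinite, then the continuous map
f((t_m)_m) = (exp(2πi t_{ρ(n)}/n))_n (the circle modeled as ℝ/2πℤ, so the n-th
coordinate is the class of 2π t_{ρ(n)}/n) is a continuous reduction of ℓ∞ to the
relation E on (S¹)^ℕ given by ∃ k, ∀ n ≥ 1, arc-dist(x_n, y_n) ≤ 2πk/n. -/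
theorem stmt4 (ρ : ℕ → ℕ) (hρ : ∀ n, (ρ ⁻¹' {n}).Infinite) :
    Continuous (fun (t : ℕ → ℝ) (n : ℕ) => ((2 * π * t (ρ n) / n : ℝ) : AddCircle (2 * π))) ∧
    ∀ x y : ℕ → ℝ,
      (∃ k : ℝ, ∀ m, |x m - y m| ≤ k) ↔
      ∃ k : ℕ, ∀ n : ℕ, 1 ≤ n →
        dist ((2 * π * x (ρ n) / n : ℝ) : AddCircle (2 * π))
             ((2 * π * y (ρ n) / n : ℝ) : AddCircle (2 * π)) ≤ 2 * π * k / n := by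
  have h2π : (0 : ℝ) < 2 * π := by positivity
  refine ⟨continuous_pi fun n => (AddCircle.continuous_mk' _).comp (by fun_prop), fun x y => ?_⟩
  constructor
  · rintro ⟨k, hk⟩
    refine ⟨⌈k⌉₊, fun n _ => ?_⟩
    calc _ ≤ 2 * π * |x (ρ n) - y (ρ n)| / n :=
          AddCircle.dist_coe_mul_div_le h2π.le _ _ n.cast_nonneg
      _ ≤ 2 * π * ⌈k⌉₊ / n := by gcongr; exact (hk _).trans (Nat.le_ceil k)
  · rintro ⟨k, hk⟩
    refine ⟨k, fun m => ?_⟩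
    obtain ⟨n, rfl, hn⟩ := (hρ m).exists_gt ⌈2 * |x m - y m|⌉₊
    have hn_pos : (0 : ℝ) < n := by exact_mod_cast (Nat.zero_le _).trans_lt hn
    have hlarge : 2 * |x (ρ n) - y (ρ n)| ≤ n := (Nat.le_ceil _).trans (by exact_mod_cast hn.le)
    have hE := hk n (by exact_mod_cast hn_pos)
    rwa [AddCircle.dist_coe_mul_div_eq h2π hn_pos hlarge, div_le_div_iff_of_pos_right hn_pos,
      mul_le_mul_iff_right₀ h2π] at hE
end

section
/- Let G be a compact Polish topological group and H a subgroup of G that is a K_σ subset. If the coset equivalence relation E_H = {(x,y) ∈ G × G : x·y⁻¹ ∈ H} is non-meager in G × G, then H is an open (hence also closed) subgroup of G. -/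
/-!
The coset relation of `H` is the preimage of `H` under the continuous open map
`(x, y) ↦ x * y⁻¹`, so `H` itself is non-meagre. Writing `H` as a countable union of compact,
hence closed, sets, one of them is not nowhere dense and so has interior; a subgroup with
nonempty interior is open, and an open subgroup is closed.
-/

open Set Topology

theorem isOpenMap_mul_inv {G : Type*} [Group G] [TopologicalSpace G] [IsTopologicalGroup G] :
    IsOpenMap fun p : G × G => p.1 * p.2⁻¹ := by
  intro U hU
  have hslices : (fun p : G × G => p.1 * p.2⁻¹) '' U = ⋃ y, (· * y⁻¹) '' ((·, y) ⁻¹' U) := by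
    ext z
    simp only [mem_image, mem_iUnion, mem_preimage, Prod.exists]
    constructor
    · rintro ⟨x, y, hxy, rfl⟩
      exact ⟨y, _, hxy, rfl⟩
    · rintro ⟨y, x, hxy, rfl⟩
      exact ⟨x, y, hxy, rfl⟩
  rw [hslices]
  exact isOpen_iUnion fun y => isOpenMap_mul_right _ _ (hU.preimage (Continuous.prodMk_left y))

theorem exists_nonempty_interior_of_not_isMeagre_iUnion {X ι : Type*} [TopologicalSpace X]
    [Countable ι] {C : ι → Set X} (hC : ∀ i, IsClosed (C i)) (h : ¬IsMeagre (⋃ i, C i)) :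
    ∃ i, (interior (C i)).Nonempty := by
  contrapose! h
  exact isMeagre_iUnion fun i => ((hC i).isNowhereDense_iff.2 (h i)).isMeagre

theorem Subgroup.isOpen_of_isSigmaCompact_of_not_isMeagre {G : Type*} [Group G]
    [TopologicalSpace G] [IsTopologicalGroup G] [T2Space G] (H : Subgroup G)
    (hσ : IsSigmaCompact (H : Set G)) (hH : ¬IsMeagre (H : Set G)) : IsOpen (H : Set G) := by
  obtain ⟨C, hC, hunion⟩ := hσ
  rw [← hunion] at hH
  obtain ⟨n, x, hx⟩ :=
    exists_nonempty_interior_of_not_isMeagre_iUnion (fun n => (hC n).isClosed) hH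
  refine H.isOpen_of_mem_nhds (Filter.mem_of_superset (mem_interior_iff_mem_nhds.1 hx) ?_)
  exact hunion ▸ subset_iUnion C n

theorem stmt5_general {G : Type*} [Group G] [TopologicalSpace G] [IsTopologicalGroup G]
    [PolishSpace G] (H : Subgroup G)
    (hKσ : ∃ C : ℕ → Set G, (∀ n, IsCompact (C n)) ∧ (H : Set G) = ⋃ n, C n)
    (hnm : ¬ IsMeagre {p : G × G | p.1 * p.2⁻¹ ∈ H}) :
    IsOpen (H : Set G) ∧ IsClosed (H : Set G) := by
  obtain ⟨C, hC, hunion⟩ := hKσ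
  have hH : ¬IsMeagre (H : Set G) := fun hmeagre =>
    hnm (hmeagre.preimage_of_isOpenMap (continuous_fst.mul continuous_snd.inv) isOpenMap_mul_inv)
  have hopen := H.isOpen_of_isSigmaCompact_of_not_isMeagre ⟨C, hC, hunion.symm⟩ hH
  exact ⟨hopen, H.isClosed_of_isOpen hopen⟩

/-- In a compact Polish group, a K_σ subgroup whose coset equivalence
relation is non-meager in G × G is open (hence also closed). -/
theorem stmt5 {G : Type*} [Group G] [TopologicalSpace G] [IsTopologicalGroup G]
    [CompactSpace G] [PolishSpace G] (H : Subgroup G)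
    (hKσ : ∃ C : ℕ → Set G, (∀ n, IsCompact (C n)) ∧ (H : Set G) = ⋃ n, C n)
    (hnm : ¬ IsMeagre {p : G × G | p.1 * p.2⁻¹ ∈ H}) :
    IsOpen (H : Set G) ∧ IsClosed (H : Set G) :=
  stmt5_general H hKσ hnm
end

section
/- Let G be a Polish group acting continuously by homeomorphisms on a Polish space X, with orbit equivalence relation E_a. Suppose some orbit is dense in X and E_a is meager in X × X. Then E₀ is Borel reducible to E_a, where E₀ is the equivalence relation on 2^ℕ defined by x E₀ y iff x(m) = y(m) for all but finitely many m. -/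
/-!
Write the meagre relation `E_a` as disjoint from `⋂ₙ Uₙ` for a decreasing sequence of dense open
sets `Uₙ ⊆ X × X`. By induction we choose nonempty open sets `Vₙ` and group elements `gₙ`, and put
`Tₙ(x) = g₀^x₀ ⋯ gₙ₋₁^xₙ₋₁`. The dense orbit supplies a point `p ∈ Vₙ` and `gₙ` with
`(p, gₙ p)` in the dense open set of pairs all of whose translates by the finitely many values of
`Tₙ` lie in `Uₙ`; `Vₙ₊₁` is a small neighbourhood of `p`. The reduction sends `x` to the unique
point of `⋂ₙ Tₙ(x) • closure Vₙ`. If `x, y` agree from `n` on, then `Tₘ(y) Tₘ(x)⁻¹` is constant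
for `m ≥ n` and carries `f x` to `f y`. If they differ at infinitely many `m`, the pair
`(f x, f y)` (or its swap) lies in `Uₘ` for infinitely many `m`, hence in every `Uₙ`, so it is not
in `E_a`.
-/

open Set Filter Topology Pointwise MulAction

theorem IsMeagre.exists_antitone_isOpen_dense {X : Type*} [TopologicalSpace X] {s : Set X}
    (hs : IsMeagre s) :
    ∃ U : ℕ → Set X, Antitone U ∧ (∀ n, IsOpen (U n)) ∧ (∀ n, Dense (U n)) ∧
      ∀ x ∈ s, ∃ n, x ∉ U n := by
  obtain ⟨S, hSo, hSd, hSc, hS⟩ := mem_residual_iff.mp hs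
  obtain ⟨f, hf⟩ := (hSc.insert univ).exists_eq_range (insert_nonempty _ _)
  have hfS : ∀ i, f i = univ ∨ f i ∈ S := fun i => by
    simp [← mem_insert_iff, hf]
  have hfo : ∀ i, IsOpen (f i) := fun i => by
    rcases hfS i with h | h
    exacts [h ▸ isOpen_univ, hSo _ h]
  have hfd : ∀ i, Dense (f i) := fun i => by
    rcases hfS i with h | h
    exacts [h ▸ dense_univ, hSd _ h]
  refine ⟨fun n => ⋂₀ (f '' Iic n), fun m n hmn => sInter_subset_sInter
      (image_mono (Iic_subset_Iic.mpr hmn)),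
    fun n => ((finite_Iic n).image f).isOpen_sInter (forall_mem_image.2 fun i _ => hfo i),
    fun n => ((finite_Iic n).image f).dense_sInter (forall_mem_image.2 fun i _ => hfo i)
      (forall_mem_image.2 fun i _ => hfd i), fun x hx => ?_⟩
  obtain ⟨t, htS, hxt⟩ : ∃ t ∈ S, x ∉ t := by
    by_contra! h
    exact hS (mem_sInter.mpr h) hx
  obtain ⟨i, rfl⟩ : t ∈ range f := hf ▸ mem_insert_of_mem _ htS
  exact ⟨i, fun hx' => hxt (hx' _ (mem_image_of_mem f (mem_Iic.2 le_rfl)))⟩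

theorem exists_seq_of_forall_exists_rel {α : Type*} (P : α → Prop) (R : ℕ → α → α → Prop)
    {a₀ : α} (h₀ : P a₀) (h : ∀ n a, P a → ∃ b, P b ∧ R n a b) :
    ∃ f : ℕ → α, f 0 = a₀ ∧ (∀ n, P (f n)) ∧ ∀ n, R n (f n) (f (n + 1)) := by
  choose next hnextP hnextR using h
  let F : ℕ → {a // P a} := fun n =>
    Nat.rec ⟨a₀, h₀⟩ (fun n a => ⟨next n a a.2, hnextP n a a.2⟩) n
  exact ⟨fun n => (F n).1, rfl, fun n => (F n).2, fun n => hnextR n (F n).1 (F n).2⟩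

section Action

variable {G X : Type*} [Group G] [MulAction G X]

theorem exists_smul_mem_of_dense_orbit [TopologicalSpace X] {x₀ : X}
    (hx₀ : Dense (orbit G x₀)) {W : Set (X × X)} (hWo : IsOpen W) (hWne : W.Nonempty) :
    ∃ (p : X) (g : G), (p, g • p) ∈ W := by
  obtain ⟨⟨a, b⟩, hab⟩ := hWne
  obtain ⟨A, B, hAo, hBo, ha, hb, hAB⟩ := isOpen_prod_iff.mp hWo a b hab
  obtain ⟨_, ⟨g₁, rfl⟩, hg₁⟩ := hx₀.exists_mem_open hAo ⟨a, ha⟩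
  obtain ⟨_, ⟨g₂, rfl⟩, hg₂⟩ := hx₀.exists_mem_open hBo ⟨b, hb⟩
  refine ⟨g₁ • x₀, g₂ * g₁⁻¹, hAB ⟨hg₁, ?_⟩⟩
  rwa [smul_smul, inv_mul_cancel_right]

theorem isOpen_dense_setOf_forall_smul_mem [TopologicalSpace X] [ContinuousConstSMul G X]
    {U : Set (X × X)} (hUo : IsOpen U) (hUd : Dense U) {S : Set G} (hS : S.Finite) :
    IsOpen {q : X × X | ∀ a ∈ S, ∀ b ∈ S, (a • q.1, b • q.2) ∈ U} ∧
      Dense {q : X × X | ∀ a ∈ S, ∀ b ∈ S, (a • q.1, b • q.2) ∈ U} := by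
  let φ : G × G → X × X → X × X := fun ab => Prod.map (ab.1 • ·) (ab.2 • ·)
  have hset : {q : X × X | ∀ a ∈ S, ∀ b ∈ S, (a • q.1, b • q.2) ∈ U} =
      ⋂₀ ((fun ab => φ ab ⁻¹' U) '' S ×ˢ S) := by
    ext q
    simp only [φ, mem_ofPred_eq, mem_sInter, forall_mem_image, mem_prod, mem_preimage,
      and_imp, Prod.forall]
    exact ⟨fun h a b ha hb => h a ha b hb, fun h a ha b hb => h a b ha hb⟩
  have hfin := (hS.prod hS).image fun ab => φ ab ⁻¹' U
  have hopen : ∀ t ∈ (fun ab => φ ab ⁻¹' U) '' S ×ˢ S, IsOpen t :=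
    forall_mem_image.2 fun ab _ => hUo.preimage (by fun_prop)
  rw [hset]
  exact ⟨hfin.isOpen_sInter hopen, hfin.dense_sInter hopen <| forall_mem_image.2 fun ab _ =>
    hUd.preimage ((isOpenMap_smul ab.1).prodMap (isOpenMap_smul ab.2))⟩

theorem exists_isOpen_smul_refinement [MetricSpace X] [ContinuousConstSMul G X] {x₀ : X}
    (hx₀ : Dense (orbit G x₀)) {U : Set (X × X)} (hUo : IsOpen U) (hUd : Dense U)
    {V : Set X} (hVo : IsOpen V) (hVne : V.Nonempty) {S : Set G} (hS : S.Finite)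
    {ε : ℝ} (hε : 0 < ε) :
    ∃ (g : G) (V' : Set X), IsOpen V' ∧ V'.Nonempty ∧ closure V' ⊆ V ∧ g • closure V' ⊆ V ∧
      (∀ a ∈ S, ∀ v ∈ closure V', ∀ w ∈ closure V',
        dist (a • v) (a • w) < ε ∧ dist ((a * g) • v) ((a * g) • w) < ε) ∧
      ∀ a ∈ S, ∀ b ∈ S, ∀ v ∈ closure V', ∀ w ∈ closure V', (a • v, (b * g) • w) ∈ U := by
  obtain ⟨hGo, hGd⟩ := isOpen_dense_setOf_forall_smul_mem hUo hUd hS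
  obtain ⟨p, g, ⟨hpV, hgpV⟩, hpgp⟩ := exists_smul_mem_of_dense_orbit hx₀
    ((hVo.prod hVo).inter hGo) (hGd.inter_open_nonempty _ (hVo.prod hVo) (hVne.prod hVne))
  have hnear : ∀ᶠ q : X × X in 𝓝 (p, p), q.1 ∈ V ∧ g • q.1 ∈ V ∧
      (∀ a ∈ S, dist (a • q.1) (a • q.2) < ε ∧ dist ((a * g) • q.1) ((a * g) • q.2) < ε) ∧
      ∀ a ∈ S, ∀ b ∈ S, (a • q.1, (b * g) • q.2) ∈ U := by
    have hdist : ∀ c : G, ∀ᶠ q : X × X in 𝓝 (p, p), dist (c • q.1) (c • q.2) < ε := fun c =>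
      (isOpen_lt (by fun_prop) continuous_const).mem_nhds (by simpa using hε)
    refine ((continuous_fst.tendsto (p, p)).eventually_mem (hVo.mem_nhds hpV)).and <|
      (((continuous_const_smul g).comp continuous_fst |>.tendsto (p, p)).eventually_mem
        (hVo.mem_nhds hgpV)).and <|
      ((eventually_all_finite hS).2 fun a _ => (hdist a).and (hdist (a * g))).and <|
      (eventually_all_finite hS).2 fun a ha => (eventually_all_finite hS).2 fun b hb => ?_
    refine ((by fun_prop : Continuous fun q : X × X => (a • q.1, (b * g) • q.2)).tendsto
      (p, p)).eventually_mem (hUo.mem_nhds ?_)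
    simpa [mul_smul] using hpgp a ha b hb
  rw [nhds_prod_eq] at hnear
  obtain ⟨N, hN, hNN⟩ := mem_prod_self_iff.1 hnear
  obtain ⟨K, hK, hKc, hKN⟩ := exists_mem_nhds_isClosed_subset hN
  have hcl : closure (interior K) ⊆ N := (closure_minimal interior_subset hKc).trans hKN
  have hgood {v w} (hv : v ∈ closure (interior K)) (hw : w ∈ closure (interior K)) :=
    hNN (mk_mem_prod (hcl hv) (hcl hw))
  refine ⟨g, interior K, isOpen_interior, ⟨p, mem_interior_iff_mem_nhds.2 hK⟩,
    fun v hv => (hgood hv hv).1, ?_, fun a ha v hv w hw => (hgood hv hw).2.2.1 a ha,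
    fun a ha b hb v hv w hw => (hgood hv hw).2.2.2 a ha b hb⟩
  rintro _ ⟨v, hv, rfl⟩
  exact (hgood hv hv).2.1

variable (G X) in
/-- `T n x` plays the role of `g₀^x₀ ⋯ gₙ₋₁^xₙ₋₁`, and `C n` of `closure Vₙ`. -/
structure E₀Scheme [MetricSpace X] (U : ℕ → Set (X × X)) where
  C : ℕ → Set X
  T : ℕ → (ℕ → Bool) → G
  isClosed : ∀ n, IsClosed (C n)
  nonempty : ∀ n, (C n).Nonempty
  T_zero : ∀ x, T 0 x = 1
  T_succ : ∀ n, ∃ g, ∀ x, T (n + 1) x = T n x * if x n then g else 1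
  smul_subset : ∀ n x, T (n + 1) x • C (n + 1) ⊆ T n x • C n
  dist_le : ∀ n x, ∀ v ∈ C n, ∀ w ∈ C n, dist (T n x • v) (T n x • w) ≤ (1 / 2 : ℝ) ^ n
  pair_mem : ∀ n x y, x n = false → y n = true → ∀ v ∈ C (n + 1), ∀ w ∈ C (n + 1),
    (T (n + 1) x • v, T (n + 1) y • w) ∈ U n

namespace E₀Scheme

variable [MetricSpace X] {U : ℕ → Set (X × X)} (σ : E₀Scheme G X U) {x y : ℕ → Bool} {n m : ℕ}

theorem T_eq_of_forall_lt (h : ∀ i < n, x i = y i) : σ.T n x = σ.T n y := by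
  induction n with
  | zero => rw [σ.T_zero, σ.T_zero]
  | succ n ih =>
    obtain ⟨g, hg⟩ := σ.T_succ n
    rw [hg, hg, ih fun i hi => h i (by omega), h n n.lt_succ_self]

theorem T_mul_inv_of_forall_ge (h : ∀ i ≥ n, x i = y i) (hnm : n ≤ m) :
    σ.T m y * (σ.T m x)⁻¹ = σ.T n y * (σ.T n x)⁻¹ := by
  induction m, hnm using Nat.le_induction with
  | base => rfl
  | succ m hnm ih =>
    obtain ⟨g, hg⟩ := σ.T_succ m
    rw [hg, hg, h m hnm, ← ih]
    group

theorem smul_subset_of_le (hnm : n ≤ m) : σ.T m x • σ.C m ⊆ σ.T n x • σ.C n := by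
  induction m, hnm using Nat.le_induction with
  | base => rfl
  | succ m _ ih => exact (σ.smul_subset m x).trans ih

theorem dist_le_of_mem {a b : X} (ha : a ∈ σ.T n x • σ.C n) (hb : b ∈ σ.T n x • σ.C n) :
    dist a b ≤ (1 / 2 : ℝ) ^ n := by
  obtain ⟨v, hv, rfl⟩ := ha
  obtain ⟨w, hw, rfl⟩ := hb
  exact σ.dist_le n x v hv w hw

noncomputable def approx (x : ℕ → Bool) (m : ℕ) : X := σ.T m x • (σ.nonempty m).some

theorem approx_mem (hnm : n ≤ m) : σ.approx x m ∈ σ.T n x • σ.C n :=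
  σ.smul_subset_of_le hnm (smul_mem_smul_set (σ.nonempty m).some_mem)

theorem cauchySeq_approx (x : ℕ → Bool) : CauchySeq (σ.approx x) :=
  cauchySeq_of_le_geometric (1 / 2) 1 (by norm_num) fun n => by
    simpa using σ.dist_le_of_mem (σ.approx_mem le_rfl) (σ.approx_mem n.le_succ)

noncomputable def toFun (x : ℕ → Bool) : X :=
  haveI : Nonempty X := ⟨σ.approx x 0⟩
  limUnder atTop (σ.approx x)

variable [CompleteSpace X]

theorem tendsto_approx (x : ℕ → Bool) : Tendsto (σ.approx x) atTop (𝓝 (σ.toFun x)) :=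
  (σ.cauchySeq_approx x).tendsto_limUnder

variable [ContinuousConstSMul G X]

theorem toFun_mem (x : ℕ → Bool) (n : ℕ) : σ.toFun x ∈ σ.T n x • σ.C n :=
  ((σ.isClosed n).smul _).mem_of_tendsto (σ.tendsto_approx x) <|
    eventually_atTop.2 ⟨n, fun _ => σ.approx_mem⟩

theorem dist_toFun_le (h : ∀ i < n, x i = y i) :
    dist (σ.toFun x) (σ.toFun y) ≤ (1 / 2 : ℝ) ^ n :=
  σ.dist_le_of_mem (σ.toFun_mem x n) (σ.T_eq_of_forall_lt h ▸ σ.toFun_mem y n)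

theorem continuous_toFun : Continuous σ.toFun := by
  refine continuous_iff_continuousAt.2 fun x => Metric.tendsto_nhds.2 fun ε hε => ?_
  obtain ⟨n, hn⟩ := exists_pow_lt_of_lt_one hε (by norm_num : (1 / 2 : ℝ) < 1)
  filter_upwards [(PiNat.isOpen_cylinder _ x n).mem_nhds (PiNat.self_mem_cylinder x n)] with y hy
  exact (σ.dist_toFun_le (PiNat.mem_cylinder_iff.1 hy)).trans_lt hn

theorem smul_toFun_of_forall_ge (h : ∀ i ≥ n, x i = y i) :
    (σ.T n y * (σ.T n x)⁻¹) • σ.toFun x = σ.toFun y := by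
  refine tendsto_nhds_unique (((σ.tendsto_approx x).const_smul _).congr' ?_) (σ.tendsto_approx y)
  filter_upwards [eventually_ge_atTop n] with m hm
  rw [approx, approx, smul_smul, ← σ.T_mul_inv_of_forall_ge h hm, inv_mul_cancel_right]

theorem toFun_mem_of_ne (hx : x n = false) (hy : y n = true) :
    (σ.toFun x, σ.toFun y) ∈ U n := by
  obtain ⟨v, hv, hvx⟩ := σ.toFun_mem x (n + 1)
  obtain ⟨w, hw, hwy⟩ := σ.toFun_mem y (n + 1)
  rw [← hvx, ← hwy]
  exact σ.pair_mem n x y hx hy v hv w hw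

theorem eventuallyEq_iff_exists_smul_eq (hU : Antitone U)
    (hcover : ∀ p : X × X, (∃ g : G, g • p.1 = p.2) → ∃ n, p ∉ U n) :
    (∃ n, ∀ m ≥ n, x m = y m) ↔ ∃ g : G, g • σ.toFun x = σ.toFun y := by
  refine ⟨fun ⟨n, h⟩ => ⟨_, σ.smul_toFun_of_forall_ge h⟩, fun ⟨g, hg⟩ => ?_⟩
  obtain ⟨N₁, hN₁⟩ := hcover (σ.toFun x, σ.toFun y) ⟨g, hg⟩
  obtain ⟨N₂, hN₂⟩ := hcover (σ.toFun y, σ.toFun x) ⟨g⁻¹, by rw [← hg, inv_smul_smul]⟩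
  by_contra! hne
  obtain ⟨m, hm, hxy⟩ := hne (max N₁ N₂)
  cases hx : x m <;> cases hy : y m
  · exact hxy (hx.trans hy.symm)
  · exact hN₁ (hU (le_of_max_le_left hm) (σ.toFun_mem_of_ne hx hy))
  · exact hN₂ (hU (le_of_max_le_right hm) (σ.toFun_mem_of_ne hy hx))
  · exact hxy (hx.trans hy.symm)

end E₀Scheme

def IsE₀SchemeStep [MetricSpace X] (U : Set (X × X)) (n : ℕ) (V : Set X) (T : (ℕ → Bool) → G)
    (V' : Set X) (T' : (ℕ → Bool) → G) : Prop :=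
  (∃ g, ∀ x, T' x = T x * if x n then g else 1) ∧
  (∀ x, T' x • closure V' ⊆ T x • closure V) ∧
  (∀ x, ∀ v ∈ closure V', ∀ w ∈ closure V', dist (T' x • v) (T' x • w) ≤ (1 / 2 : ℝ) ^ (n + 1)) ∧
  ∀ x y, x n = false → y n = true → ∀ v ∈ closure V', ∀ w ∈ closure V', (T' x • v, T' y • w) ∈ U

theorem exists_isE₀SchemeStep [MetricSpace X] [ContinuousConstSMul G X] {x₀ : X}
    (hx₀ : Dense (orbit G x₀)) {U : Set (X × X)} (hUo : IsOpen U) (hUd : Dense U)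
    {V : Set X} (hVo : IsOpen V) (hVne : V.Nonempty) {T : (ℕ → Bool) → G}
    (hT : (range T).Finite) (n : ℕ) :
    ∃ V' T', IsOpen V' ∧ V'.Nonempty ∧ (range T').Finite ∧ IsE₀SchemeStep U n V T V' T' := by
  obtain ⟨g, V', hV'o, hV'ne, hcl, hgcl, hdist, hmem⟩ := exists_isOpen_smul_refinement hx₀
    hUo hUd hVo hVne hT (ε := (1 / 2) ^ (n + 1)) (by positivity)
  let T' : (ℕ → Bool) → G := fun x => T x * if x n then g else 1
  refine ⟨V', T', hV'o, hV'ne, (hT.mul (toFinite {1, g})).subset ?_, ⟨g, fun x => rfl⟩,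
    fun x => ?_, fun x v hv w hw => ?_, fun x y hx hy v hv w hw => ?_⟩
  · rintro _ ⟨x, rfl⟩
    exact mul_mem_mul (mem_range_self x) (by split_ifs <;> simp)
  · simp only [T', mul_smul]
    refine smul_set_mono ((?_ : _ ⊆ V).trans subset_closure)
    split_ifs
    exacts [hgcl, (one_smul G _).trans_subset hcl]
  · simp only [T']
    split_ifs
    exacts [(hdist _ (mem_range_self x) v hv w hw).2.le,
      by simpa using (hdist _ (mem_range_self x) v hv w hw).1.le]
  · simpa [T', hx, hy] using hmem _ (mem_range_self x) _ (mem_range_self y) v hv w hw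

theorem nonempty_E₀Scheme_of_dense_orbit [MetricSpace X] [ContinuousConstSMul G X] {x₀ : X}
    (hx₀ : Dense (orbit G x₀)) {U : ℕ → Set (X × X)} (hUo : ∀ n, IsOpen (U n))
    (hUd : ∀ n, Dense (U n)) : Nonempty (E₀Scheme G X U) := by
  obtain ⟨s, hs0, hsP, hsR⟩ := exists_seq_of_forall_exists_rel
    (fun s : Set X × ((ℕ → Bool) → G) => IsOpen s.1 ∧ s.1.Nonempty ∧ (range s.2).Finite)
    (fun n s s' => IsE₀SchemeStep (U n) n s.1 s.2 s'.1 s'.2)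
    (a₀ := (Metric.ball x₀ (1 / 2), fun _ => 1))
    ⟨Metric.isOpen_ball, Metric.nonempty_ball.2 (by norm_num),
      (finite_singleton 1).subset range_const_subset⟩
    fun n s ⟨hVo, hVne, hT⟩ =>
      let ⟨V', T', hV'o, hV'ne, hT', hstep⟩ :=
        exists_isE₀SchemeStep hx₀ (hUo n) (hUd n) hVo hVne hT n
      ⟨(V', T'), ⟨hV'o, hV'ne, hT'⟩, hstep⟩
  refine ⟨{
    C n := closure (s n).1
    T n := (s n).2
    isClosed _ := isClosed_closure
    nonempty n := (hsP n).2.1.closure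
    T_zero := by simp [hs0]
    T_succ n := (hsR n).1
    smul_subset n := (hsR n).2.1
    dist_le := ?_
    pair_mem n := (hsR n).2.2.2 }⟩
  rintro (_ | n) x v hv w hw
  · rw [hs0] at hv hw ⊢
    have hv' := Metric.closure_ball_subset_closedBall hv
    have hw' := Metric.closure_ball_subset_closedBall hw
    rw [Metric.mem_closedBall] at hv' hw'
    simp only [one_smul, pow_zero]
    linarith [dist_triangle_right v w x₀]
  · exact (hsR n).2.2.1 x v hv w hw

end Action

theorem stmt6_general {G X : Type*} [Group G] [TopologicalSpace G]
    [TopologicalSpace X] [PolishSpace X]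
    [MeasurableSpace X] [BorelSpace X] [MulAction G X]
    (hcont : Continuous fun p : G × X => p.1 • p.2)
    (hdense : ∃ x : X, Dense (MulAction.orbit G x))
    (hmeager : IsMeagre {p : X × X | ∃ g : G, g • p.1 = p.2}) :
    ∃ f : (ℕ → Bool) → X, Measurable f ∧
      ∀ x y : ℕ → Bool, (∃ n, ∀ m ≥ n, x m = y m) ↔ ∃ g : G, g • f x = f y := by
  obtain ⟨x₀, hx₀⟩ := hdense
  have : ContinuousSMul G X := ⟨hcont⟩
  let := TopologicalSpace.upgradeIsCompletelyMetrizable X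
  obtain ⟨U, hUanti, hUo, hUd, hcover⟩ := hmeager.exists_antitone_isOpen_dense
  obtain ⟨σ⟩ := nonempty_E₀Scheme_of_dense_orbit hx₀ hUo hUd
  exact ⟨σ.toFun, σ.continuous_toFun.measurable,
    fun x y => σ.eventuallyEq_iff_exists_smul_eq hUanti hcover⟩

/-- Becker–Kechris: If a Polish group G acts continuously on a Polish
space X with a dense orbit and the orbit equivalence relation is meager in X × X,
then E₀ is Borel reducible to the orbit equivalence relation. -/
theorem stmt6 {G X : Type*} [Group G] [TopologicalSpace G] [IsTopologicalGroup G]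
    [PolishSpace G] [TopologicalSpace X] [PolishSpace X]
    [MeasurableSpace X] [BorelSpace X] [MulAction G X]
    (hcont : Continuous fun p : G × X => p.1 • p.2)
    (hdense : ∃ x : X, Dense (MulAction.orbit G x))
    (hmeager : IsMeagre {p : X × X | ∃ g : G, g • p.1 = p.2}) :
    ∃ f : (ℕ → Bool) → X, Measurable f ∧
      ∀ x y : ℕ → Bool, (∃ n, ∀ m ≥ n, x m = y m) ↔ ∃ g : G, g • f x = f y :=
  stmt6_general hcont hdense hmeager
end

section
/- Let π : G → R be a surjective group homomorphism with kernel contained in the center of G. If R is a perfect group, then the commutator subgroup [G,G] maps onto R under π, and [G,G] is itself perfect. -/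
/-!
Since `R` is perfect and `π` is onto, `π [G,G] = [R,R] = R`, so `G = [G,G] · ker π` and hence
`G = [G,G] · Z(G)`. A commutator `⁅a, b⁆` is unchanged when `a` and `b` are multiplied by
central elements, so every commutator of `G` is already a commutator of two elements of `[G,G]`.
-/

section

open Subgroup
open scoped commutatorElement

variable {G : Type*} [Group G]

theorem map_commutator_eq_top_of_surjective {R : Type*} [Group R] {f : G →* R}
    (hsurj : Function.Surjective f) (hperf : commutator R = ⊤) :
    (commutator G).map f = ⊤ := by
  rw [commutator_def, map_commutator, map_top_of_surjective f hsurj, ← commutator_def, hperf]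

theorem sup_center_eq_top_of_map_eq_top {R : Type*} [Group R] {f : G →* R}
    (hker : f.ker ≤ center G) {H : Subgroup G} (h : H.map f = ⊤) : H ⊔ center G = ⊤ := by
  rw [eq_top_iff, ← comap_top f, ← h, comap_map_eq]
  exact sup_le_sup_left hker H

theorem commutatorElement_mul_mem_center (a b : G) {z w : G} (hz : z ∈ center G)
    (hw : w ∈ center G) : ⁅a * z, b * w⁆ = ⁅a, b⁆ := by
  have hzc : ∀ g : G, ⁅z, g⁆ = 1 := fun g =>
    commutatorElement_eq_one_iff_mul_comm.mpr (mem_center_iff.mp hz g).symm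
  have hcw : ∀ g : G, ⁅g, w⁆ = 1 := fun g =>
    commutatorElement_eq_one_iff_mul_comm.mpr (mem_center_iff.mp hw g)
  rw [commutatorElement_mul_right_eq_mul_conj, hcw, mul_one, mul_inv_cancel_right,
    commutatorElement_mul_left_eq_conj_mul, hzc, mul_one, mul_inv_cancel, one_mul]

theorem commutator_eq_of_sup_center_eq_top {H : Subgroup G} (h : H ⊔ center G = ⊤) :
    commutator G = ⁅H, H⁆ := by
  have hdec : ∀ g : G, ∃ c ∈ H, ∃ z ∈ center G, c * z = g := fun g =>
    mem_sup_of_normal_right.mp (h ▸ mem_top g)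
  refine le_antisymm ?_ (commutator_mono le_top le_top)
  refine commutator_le.mpr fun g₁ _ g₂ _ => ?_
  obtain ⟨c₁, hc₁, z₁, hz₁, rfl⟩ := hdec g₁
  obtain ⟨c₂, hc₂, z₂, hz₂, rfl⟩ := hdec g₂
  rw [commutatorElement_mul_mem_center c₁ c₂ hz₁ hz₂]
  exact commutator_mem_commutator hc₁ hc₂

end

/-- If π : G → R is a surjective homomorphism with central kernel and R
is perfect, then [G,G] maps onto R and [G,G] is perfect. -/
theorem stmt8 {G R : Type*} [Group G] [Group R] (f : G →* R)
    (hsurj : Function.Surjective f) (hker : f.ker ≤ Subgroup.center G)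
    (hperf : commutator R = ⊤) :
    Subgroup.map f (commutator G) = ⊤ ∧
      ⁅commutator G, commutator G⁆ = commutator G := by
  have hmap := map_commutator_eq_top_of_surjective hsurj hperf
  have hsup := sup_center_eq_top_of_map_eq_top hker hmap
  exact ⟨hmap, (commutator_eq_of_sup_center_eq_top hsup).symm⟩
end

section
/- Let X be a Polish space and Y a compact metric space. Let C ⊆ X × Y be a closed set whose projection to X is all of X, and such that the vertical section C_x = {y : (x,y) ∈ C} is countable for every x ∈ X. Then there exist Borel sets B_n ⊆ X (n ∈ ℕ) covering X and a function f : X → Y with f(x) ∈ C_x for every x, such that the restriction of f to each B_n is continuous. -/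
/-!
A countable nonempty closed subset of a Polish space is not perfect, so each section `C_x` has an
isolated point and therefore meets some member `D n` of a countable family of closed sets
(closures of basic open sets) in exactly one point. Let `f x` be that point for the least such `n`.
On the set where the least index is `n`, the graph of `f` lies in the closed set `C ∩ (X × D n)`,
whose sections there are singletons, and compactness of `Y` turns this into continuity. These sets
are Borel: the set of `x` over which a closed set has a singleton section is a closed projection
minus the projection of an `Fσ` set, and projections along a compact factor preserve closedness.
-/

open Set Filter Topology TopologicalSpace

theorem IsClosed.exists_not_accPt_of_countable {α : Type*} [TopologicalSpace α] [PolishSpace α]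
    {K : Set α} (hK : IsClosed K) (hc : K.Countable) (hne : K.Nonempty) :
    ∃ y ∈ K, ¬AccPt y (𝓟 K) := by
  by_contra! h
  let := upgradeIsCompletelyMetrizable α
  obtain ⟨g, hgK, -, hg⟩ := (show Perfect K from ⟨hK, h⟩).exists_nat_bool_injection hne
  have : Uncountable (ℕ → Bool) := by
    rw [← Cardinal.aleph0_lt_mk_iff]
    simpa using Cardinal.aleph0_lt_continuum
  exact not_countable_univ ((mapsTo_range g univ).countable_of_injOn hg.injOn (hc.mono hgK))

theorem exists_seq_isClosed_subset_of_mem_nhds (Y : Type*) [TopologicalSpace Y] [RegularSpace Y]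
    [SecondCountableTopology Y] :
    ∃ D : ℕ → Set Y, (∀ n, IsClosed (D n)) ∧ ∀ y, ∀ U ∈ 𝓝 y, ∃ n, y ∈ D n ∧ D n ⊆ U := by
  -- `∅` is only added to make the family nonempty, so that it can be enumerated.
  obtain ⟨D, hD⟩ := ((countable_countableBasis Y).image closure).insert ∅ |>.exists_eq_range
    (insert_nonempty _ _)
  refine ⟨D, fun n => ?_, fun y U hU => ?_⟩
  · have hn : D n ∈ insert ∅ (closure '' countableBasis Y) := hD ▸ mem_range_self n
    rcases hn with hn | ⟨t, -, ht⟩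
    · exact hn ▸ isClosed_empty
    · exact ht ▸ isClosed_closure
  · obtain ⟨t, ht, hyt, htU⟩ := (isBasis_countableBasis Y).exists_closure_subset hU
    obtain ⟨n, hn⟩ : closure t ∈ range D := hD ▸ mem_insert_of_mem _ (mem_image_of_mem _ ht)
    exact ⟨n, hn ▸ subset_closure hyt, hn ▸ htU⟩

theorem exists_inter_eq_singleton_of_not_accPt {Y : Type*} [TopologicalSpace Y] {D : ℕ → Set Y}
    (hD : ∀ y, ∀ U ∈ 𝓝 y, ∃ n, y ∈ D n ∧ D n ⊆ U) {K : Set Y} {y : Y} (hy : y ∈ K)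
    (hacc : ¬AccPt y (𝓟 K)) : ∃ n, K ∩ D n = {y} := by
  rw [accPt_iff_frequently, not_frequently] at hacc
  obtain ⟨n, hyn, hnU⟩ := hD y _ hacc
  refine ⟨n, Subset.antisymm (fun z hz => ?_) (singleton_subset_iff.2 ⟨hy, hyn⟩)⟩
  by_contra hzy
  exact hnU hz.2 ⟨hzy, hz.1⟩

section Sections

variable {X Y : Type*} [TopologicalSpace X] [TopologicalSpace Y] [CompactSpace Y]

theorem IsClosed.continuousWithinAt_of_graph_subset {F : Set (X × Y)} (hF : IsClosed F)
    {f : X → Y} {s : Set X} {x : X} (hfs : ∀ z ∈ s, (z, f z) ∈ F) (hx : Prod.mk x ⁻¹' F ⊆ {f x}) :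
    ContinuousWithinAt f s x := by
  refine tendsto_nhds_of_unique_mapClusterPt fun y hy => hx ?_
  obtain ⟨U, hUs, hUy⟩ := mapClusterPt_iff_ultrafilter.1 hy
  have hUx : Tendsto id (U : Filter X) (𝓝 x) := tendsto_id.mono_left (hUs.trans nhdsWithin_le_nhds)
  exact hF.mem_of_tendsto (hUx.prodMk_nhds hUy)
    (mem_of_superset (le_principal_iff.1 (hUs.trans inf_le_right)) hfs)

variable [MeasurableSpace X] [OpensMeasurableSpace X] [MetrizableSpace Y]

theorem measurableSet_setOf_subsingleton_of_isClosed {F : Set (X × Y)} (hF : IsClosed F) :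
    MeasurableSet {x | (Prod.mk x ⁻¹' F).Subsingleton} := by
  obtain ⟨T, hTo, hdiag⟩ := isGδ_iff_eq_iInter_nat.1 (isClosed_diagonal (X := Y)).isGδ
  set G : ℕ → Set (X × (Y × Y)) := fun n =>
    {p | (p.1, p.2.1) ∈ F ∧ (p.1, p.2.2) ∈ F ∧ p.2 ∈ (T n)ᶜ}
  have hG : ∀ n, IsClosed (G n) := fun n =>
    (hF.preimage (by fun_prop)).inter
      ((hF.preimage (by fun_prop)).inter ((hTo n).isClosed_compl.preimage continuous_snd))
  have heq : ∀ a b : Y, a = b ↔ ∀ n, (a, b) ∈ T n := fun a b => by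
    simpa using Set.ext_iff.1 hdiag (a, b)
  have hsub : {x | (Prod.mk x ⁻¹' F).Subsingleton} = (Prod.fst '' ⋃ n, G n)ᶜ := by
    ext x
    simp [Set.Subsingleton, G, heq]
  rw [hsub, image_iUnion]
  exact (MeasurableSet.iUnion fun n =>
    (isClosedMap_fst_of_compactSpace _ (hG n)).measurableSet).compl

theorem measurableSet_setOf_exists_eq_singleton_of_isClosed {F : Set (X × Y)} (hF : IsClosed F) :
    MeasurableSet {x | ∃ y, Prod.mk x ⁻¹' F = {y}} := by
  have hsplit : {x | ∃ y, Prod.mk x ⁻¹' F = {y}} =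
      Prod.fst '' F ∩ {x | (Prod.mk x ⁻¹' F).Subsingleton} := by
    ext x
    simp [exists_eq_singleton_iff_nonempty_subsingleton, Set.Nonempty]
  rw [hsplit]
  exact (isClosedMap_fst_of_compactSpace _ hF).measurableSet.inter
    (measurableSet_setOf_subsingleton_of_isClosed hF)

end Sections

theorem stmt11_general {X Y : Type*} [TopologicalSpace X]
    [MeasurableSpace X] [BorelSpace X]
    [MetricSpace Y] [CompactSpace Y]
    (C : Set (X × Y)) (hC : IsClosed C)
    (hproj : ∀ x : X, ∃ y, (x, y) ∈ C)
    (hctble : ∀ x : X, {y | (x, y) ∈ C}.Countable) :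
    ∃ B : ℕ → Set X, (∀ n, MeasurableSet (B n)) ∧ (⋃ n, B n) = Set.univ ∧
      ∃ f : X → Y, (∀ x, (x, f x) ∈ C) ∧ ∀ n, ContinuousOn f (B n) := by
  classical
  obtain ⟨D, hDc, hD⟩ := exists_seq_isClosed_subset_of_mem_nhds Y
  set F : ℕ → Set (X × Y) := fun n => C ∩ Prod.snd ⁻¹' D n
  have hF : ∀ n, IsClosed (F n) := fun n => hC.inter ((hDc n).preimage continuous_snd)
  have hcover : ∀ x, ∃ n, ∃ y, Prod.mk x ⁻¹' F n = {y} := fun x => by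
    obtain ⟨y, hy, hiso⟩ := (hC.preimage (Continuous.prodMk_right x)).exists_not_accPt_of_countable
      (hctble x) (hproj x)
    obtain ⟨n, hn⟩ := exists_inter_eq_singleton_of_not_accPt hD hy hiso
    exact ⟨n, y, hn⟩
  choose f hf using fun x => Nat.find_spec (hcover x)
  have hfF : ∀ x, (x, f x) ∈ F (Nat.find (hcover x)) := fun x => (hf x).symm.subset rfl
  refine ⟨fun n => (fun x => Nat.find (hcover x)) ⁻¹' {n}, fun n => ?_,
    eq_univ_of_forall fun x => mem_iUnion.2 ⟨_, rfl⟩, f, fun x => (hfF x).1, ?_⟩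
  · exact measurable_find hcover
      (fun k => measurableSet_setOf_exists_eq_singleton_of_isClosed (hF k))
      (measurableSet_singleton n)
  · rintro n x rfl
    refine (hF _).continuousWithinAt_of_graph_subset (fun z hz => ?_) (hf x).subset
    exact (show Nat.find (hcover z) = Nat.find (hcover x) from hz) ▸ hfF z

/-- A closed subset of X × Y (X Polish, Y compact metric) with full
projection to X and countable vertical sections admits a countably continuous
uniformization: a selector f continuous on each piece of a countable Borel cover. -/
theorem stmt11 {X Y : Type*} [TopologicalSpace X] [PolishSpace X]
    [MeasurableSpace X] [BorelSpace X]
    [MetricSpace Y] [CompactSpace Y]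
    (C : Set (X × Y)) (hC : IsClosed C)
    (hproj : ∀ x : X, ∃ y, (x, y) ∈ C)
    (hctble : ∀ x : X, {y | (x, y) ∈ C}.Countable) :
    ∃ B : ℕ → Set X, (∀ n, MeasurableSet (B n)) ∧ (⋃ n, B n) = Set.univ ∧
      ∃ f : X → Y, (∀ x, (x, f x) ∈ C) ∧ ∀ n, ContinuousOn f (B n) :=
  stmt11_general C hC hproj hctble
end

section
/- Let X be a Polish space, Y a compact metric space, C ⊆ X × Y closed with all vertical sections C_x countable, and let D ⊆ Y be a closed set. Then the set A = {x ∈ X : C_x ∩ D has exactly one point} is a G_δ subset of X. -/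
/-!
Write `F = C ∩ (X × D)`. The section `F_x` is a singleton iff it is nonempty and has no two
points at distance `≥ 1/(n+1)` for any `n`. Since `Y` is compact, projections along `Y` (and
along `Y × Y`) are closed maps, so the first condition defines a closed set and each of the
others an open set. Closed sets of the metrizable space `X` are `G_δ`.
-/

open Set

lemma Set.subsingleton_iff_forall_dist_lt_one_div {Y : Type*} [MetricSpace Y] {s : Set Y} :
    s.Subsingleton ↔ ∀ n : ℕ, ∀ y ∈ s, ∀ z ∈ s, dist y z < 1 / (n + 1) := by
  refine ⟨fun hs n y hy z hz => ?_, fun h y hy z hz => ?_⟩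
  · rw [hs hy hz, dist_self]
    positivity
  · by_contra hne
    obtain ⟨n, hn⟩ := exists_nat_one_div_lt (dist_pos.2 hne)
    exact (h n y hy z hz).not_ge hn.le

section

variable {X Y : Type*} [TopologicalSpace X]

lemma isClosed_setOf_section_nonempty [TopologicalSpace Y] [CompactSpace Y]
    {F : Set (X × Y)} (hF : IsClosed F) : IsClosed {x | {y | (x, y) ∈ F}.Nonempty} := by
  convert isClosedMap_fst_of_compactSpace F hF using 1
  ext x
  simp [Set.Nonempty]

lemma isOpen_setOf_forall_section_dist_lt [PseudoMetricSpace Y] [CompactSpace Y]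
    {F : Set (X × Y)} (hF : IsClosed F) (ε : ℝ) :
    IsOpen {x | ∀ y, (x, y) ∈ F → ∀ z, (x, z) ∈ F → dist y z < ε} := by
  have hfar : IsClosed {p : X × Y × Y |
      (p.1, p.2.1) ∈ F ∧ (p.1, p.2.2) ∈ F ∧ ε ≤ dist p.2.1 p.2.2} :=
    (hF.preimage (by fun_prop)).inter <| (hF.preimage (by fun_prop)).inter <|
      isClosed_le continuous_const (continuous_snd.fst.dist continuous_snd.snd)
  convert (isClosedMap_fst_of_compactSpace _ hfar).isOpen_compl using 1
  ext x
  simp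

lemma isGδ_setOf_section_subsingleton [MetricSpace Y] [CompactSpace Y]
    {F : Set (X × Y)} (hF : IsClosed F) : IsGδ {x | {y | (x, y) ∈ F}.Subsingleton} := by
  have h : {x | {y | (x, y) ∈ F}.Subsingleton} =
      ⋂ n : ℕ, {x | ∀ y, (x, y) ∈ F → ∀ z, (x, z) ∈ F → dist y z < 1 / (n + 1)} := by
    ext x
    simp only [mem_ofPred_eq, subsingleton_iff_forall_dist_lt_one_div, mem_iInter]
  rw [h]
  exact .iInter fun n => (isOpen_setOf_forall_section_dist_lt hF _).isGδ

end

theorem stmt12_general {X Y : Type*} [TopologicalSpace X] [PolishSpace X]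
    [MetricSpace Y] [CompactSpace Y]
    (C : Set (X × Y)) (hC : IsClosed C)
    (D : Set Y) (hD : IsClosed D) :
    IsGδ {x : X | ∃! y, y ∈ {y | (x, y) ∈ C} ∩ D} := by
  let := TopologicalSpace.upgradeIsCompletelyMetrizable X
  have hF : IsClosed (C ∩ Prod.snd ⁻¹' D) := hC.inter (hD.preimage continuous_snd)
  have h : {x : X | ∃! y, y ∈ {y | (x, y) ∈ C} ∩ D} =
      {x | {y | (x, y) ∈ C ∩ Prod.snd ⁻¹' D}.Nonempty} ∩
        {x | {y | (x, y) ∈ C ∩ Prod.snd ⁻¹' D}.Subsingleton} := by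
    ext x
    exact singleton_iff_unique_mem.symm.trans exists_eq_singleton_iff_nonempty_subsingleton
  rw [h]
  exact (isClosed_setOf_section_nonempty hF).isGδ.inter (isGδ_setOf_section_subsingleton hF)

/-- For C ⊆ X × Y closed with countable vertical sections (X Polish, Y
compact metric) and D ⊆ Y closed, the set of x such that C_x ∩ D has exactly one
point is G_δ. -/
theorem stmt12 {X Y : Type*} [TopologicalSpace X] [PolishSpace X]
    [MetricSpace Y] [CompactSpace Y]
    (C : Set (X × Y)) (hC : IsClosed C)
    (hctble : ∀ x : X, {y | (x, y) ∈ C}.Countable)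
    (D : Set Y) (hD : IsClosed D) :
    IsGδ {x : X | ∃! y, y ∈ {y | (x, y) ∈ C} ∩ D} :=
  stmt12_general C hC D hD
end

section
/- Let X and Y be compact Hausdorff spaces and let E, F be equivalence relations on X, Y respectively. Suppose C ⊆ X × Y is a closed set that projects onto both X and Y and satisfies: for all (x,y), (x',y') ∈ C, x E x' if and only if y F y'. If E is a closed subset of X × X, then F is a closed subset of Y × Y. -/
/-! As relations, `F = C⁻¹ ∘ E ∘ C` because `C` is onto `Y` and matches `E` with `F`. A composite
of closed relations through a compact middle space is closed, since it is the projection of a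
closed set along that compact factor. -/

open SetRel

theorem IsClosed.setRel_comp {α β γ : Type*} [TopologicalSpace α] [TopologicalSpace β]
    [CompactSpace β] [TopologicalSpace γ] {R : SetRel α β} {S : SetRel β γ}
    (hR : IsClosed R) (hS : IsClosed S) : IsClosed (R ○ S) := by
  have hgraph : IsClosed {q : β × α × γ | (q.2.1, q.1) ∈ R ∧ (q.1, q.2.2) ∈ S} :=
    (hR.preimage (by fun_prop)).inter (hS.preimage (by fun_prop))
  convert isClosedMap_snd_of_compactSpace _ hgraph using 1
  ext ⟨a, c⟩
  simp [mem_comp, and_comm]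

theorem stmt13_general {X Y : Type*} [TopologicalSpace X] [CompactSpace X]
    [TopologicalSpace Y]
    (E : X → X → Prop) (F : Y → Y → Prop)
    (C : Set (X × Y)) (hC : IsClosed C)
    (hprojY : ∀ y, ∃ x, (x, y) ∈ C)
    (hcompat : ∀ x y x' y', (x, y) ∈ C → (x', y') ∈ C → (E x x' ↔ F y y'))
    (hEclosed : IsClosed {p : X × X | E p.1 p.2}) :
    IsClosed {p : Y × Y | F p.1 p.2} := by
  have hF : {p : Y × Y | F p.1 p.2} = (SetRel.inv C ○ {p | E p.1 p.2}) ○ C := by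
    ext ⟨y, y'⟩
    obtain ⟨x, hx⟩ := hprojY y
    obtain ⟨x', hx'⟩ := hprojY y'
    constructor
    · exact fun h => ⟨x', ⟨x, hx, (hcompat x y x' y' hx hx').2 h⟩, hx'⟩
    · rintro ⟨z', ⟨z, hz, hE⟩, hz'⟩
      exact (hcompat z y z' y' hz hz').1 hE
  rw [hF]
  exact ((hC.preimage continuous_swap).setRel_comp hEclosed).setRel_comp hC

/-- If C is a closed subset of X × Y (compact Hausdorff spaces)
projecting onto both factors with: (x,y),(x',y') ∈ C → (x E x' ↔ y F y'), and E is
closed, then F is closed. -/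
theorem stmt13 {X Y : Type*} [TopologicalSpace X] [CompactSpace X] [T2Space X]
    [TopologicalSpace Y] [CompactSpace Y] [T2Space Y]
    (E : X → X → Prop) (F : Y → Y → Prop) (hE : Equivalence E) (hF : Equivalence F)
    (C : Set (X × Y)) (hC : IsClosed C)
    (hprojX : ∀ x, ∃ y, (x, y) ∈ C) (hprojY : ∀ y, ∃ x, (x, y) ∈ C)
    (hcompat : ∀ x y x' y', (x, y) ∈ C → (x', y') ∈ C → (E x x' ↔ F y y'))
    (hEclosed : IsClosed {p : X × X | E p.1 p.2}) :
    IsClosed {p : Y × Y | F p.1 p.2} :=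
  stmt13_general E F C hC hprojY hcompat hEclosed
end

section
/- Let X be a compact Polish space. There exists a Borel map d : F(X) → X, where F(X) is the space of closed subsets of X with the Vietoris topology, such that d(F) ∈ F for every non-empty closed set F ⊆ X. -/
/-!
Fix a dense sequence `u` in `X`. Starting from `F`, repeatedly intersect with the closed ball of
radius `2⁻ᵏ` around the first `u n` whose ball meets the current set. The centres of these balls
form a Cauchy sequence whose limit lies in `F`. Each step only asks whether the current set meets
a closed set, and `{F | F ∩ C ≠ ∅}` is Vietoris-closed for closed `C`; so by induction every
centre, and hence the limit, depends measurably on `F`.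
-/

open TopologicalSpace Metric Set Filter Topology

namespace BorelSelector

section Construction

variable {X : Type*} [MetricSpace X] {u : ℕ → X} {r : ℝ} {s : Set X}

noncomputable def firstHit (u : ℕ → X) (r : ℝ) (s : Set X) : ℕ :=
  sInf {n | (s ∩ closedBall (u n) r).Nonempty}

noncomputable def shrink (u : ℕ → X) (r : ℝ) (s : Set X) : Set X :=
  s ∩ closedBall (u (firstHit u r s)) r

noncomputable def approx (u : ℕ → X) (s : Set X) : ℕ → Set X
  | 0 => s
  | k + 1 => shrink u ((1 / 2) ^ k) (approx u s k)

noncomputable def center (u : ℕ → X) (s : Set X) (k : ℕ) : X :=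
  u (firstHit u ((1 / 2) ^ k) (approx u s k))

lemma exists_inter_closedBall_nonempty (hu : DenseRange u) (hr : 0 < r) (hs : s.Nonempty) :
    ∃ n, (s ∩ closedBall (u n) r).Nonempty := by
  obtain ⟨y, hy⟩ := hs
  obtain ⟨n, hn⟩ := denseRange_iff.1 hu y r hr
  exact ⟨n, y, hy, mem_closedBall.2 hn.le⟩

lemma shrink_nonempty (hu : DenseRange u) (hr : 0 < r) (hs : s.Nonempty) :
    (shrink u r s).Nonempty :=
  Nat.sInf_mem (exists_inter_closedBall_nonempty hu hr hs)

lemma approx_nonempty (hu : DenseRange u) (hs : s.Nonempty) : ∀ k, (approx u s k).Nonempty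
  | 0 => hs
  | k + 1 => shrink_nonempty hu (by positivity) (approx_nonempty hu hs k)

lemma approx_subset (s : Set X) : ∀ k, approx u s k ⊆ s
  | 0 => subset_rfl
  | k + 1 => inter_subset_left.trans (approx_subset s k)

lemma approx_succ_subset (s : Set X) (k : ℕ) : approx u s (k + 1) ⊆ approx u s k :=
  inter_subset_left

lemma dist_center_le {k : ℕ} {z : X} (hz : z ∈ approx u s (k + 1)) :
    dist z (center u s k) ≤ (1 / 2) ^ k :=
  mem_closedBall.1 hz.2

lemma cauchySeq_center (hu : DenseRange u) (hs : s.Nonempty) : CauchySeq (center u s) := by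
  refine cauchySeq_of_le_geometric (1 / 2) 2 (by norm_num) fun k => ?_
  obtain ⟨z, hz⟩ := approx_nonempty hu hs (k + 2)
  calc dist (center u s k) (center u s (k + 1))
      ≤ dist z (center u s k) + dist z (center u s (k + 1)) := dist_triangle_left _ _ _
    _ ≤ (1 / 2) ^ k + (1 / 2) ^ (k + 1) :=
        add_le_add (dist_center_le (approx_succ_subset s _ hz)) (dist_center_le hz)
    _ ≤ 2 * (1 / 2) ^ k := by
        rw [pow_succ]; linarith [pow_nonneg (by norm_num : (0 : ℝ) ≤ 1 / 2) k]

lemma mem_of_tendsto_center (hu : DenseRange u) (hs : IsClosed s) (hne : s.Nonempty) {x : X}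
    (hx : Tendsto (center u s) atTop (𝓝 x)) : x ∈ s := by
  choose z hz using fun k => approx_nonempty hu hne (k + 1)
  have hdist : Tendsto (fun k => dist (center u s k) (z k)) atTop (𝓝 0) :=
    squeeze_zero (fun _ => dist_nonneg)
      (fun k => (dist_comm _ _).trans_le (dist_center_le (hz k)))
      (tendsto_pow_atTop_nhds_zero_of_lt_one (by norm_num) (by norm_num))
  exact hs.mem_of_tendsto (hx.congr_dist hdist)
    (Eventually.of_forall fun k => approx_subset s (k + 1) (hz k))

end Construction

section Measurability

/-- Effros measurability of a set-valued map, tested on closed rather than open sets. -/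
def MeasurableHitting {α X : Type*} [MeasurableSpace α] [TopologicalSpace X] (S : α → Set X) :
    Prop :=
  ∀ C : Set X, IsClosed C → MeasurableSet {a | (S a ∩ C).Nonempty}

variable {α X : Type*} [MeasurableSpace α] [MetricSpace X] {u : ℕ → X} {r : ℝ}
  {S : α → Set X}

lemma measurable_firstHit (hu : DenseRange u) (hr : 0 < r) (hS : MeasurableHitting S)
    (hne : ∀ a, (S a).Nonempty) : Measurable fun a => firstHit u r (S a) := by
  classical
  have hex := fun a => exists_inter_closedBall_nonempty hu hr (hne a)
  have hfind : (fun a => firstHit u r (S a)) = fun a => Nat.find (hex a) :=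
    funext fun a => Nat.sInf_def (hex a)
  rw [hfind]
  exact measurable_find hex fun n => hS _ isClosed_closedBall

lemma measurableHitting_shrink (hu : DenseRange u) (hr : 0 < r) (hS : MeasurableHitting S)
    (hne : ∀ a, (S a).Nonempty) : MeasurableHitting fun a => shrink u r (S a) := by
  intro C hC
  have hunion : {a | (shrink u r (S a) ∩ C).Nonempty} =
      ⋃ n, (fun a => firstHit u r (S a)) ⁻¹' {n} ∩
        {a | (S a ∩ (closedBall (u n) r ∩ C)).Nonempty} := by
    ext a
    simp [shrink, inter_assoc]
  rw [hunion]
  exact .iUnion fun n => (measurable_firstHit hu hr hS hne (measurableSet_singleton n)).inter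
    (hS _ (isClosed_closedBall.inter hC))

lemma measurableHitting_approx (hu : DenseRange u) (hS : MeasurableHitting S)
    (hne : ∀ a, (S a).Nonempty) : ∀ k, MeasurableHitting fun a => approx u (S a) k
  | 0 => hS
  | k + 1 => measurableHitting_shrink hu (by positivity) (measurableHitting_approx hu hS hne k)
      fun a => approx_nonempty hu (hne a) k

lemma measurable_center [MeasurableSpace X] (hu : DenseRange u) (hS : MeasurableHitting S)
    (hne : ∀ a, (S a).Nonempty) (k : ℕ) : Measurable fun a => center u (S a) k :=
  measurable_from_nat.comp <| measurable_firstHit hu (by positivity)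
    (measurableHitting_approx hu hS hne k) fun a => approx_nonempty hu (hne a) k

theorem exists_measurable_selection [CompleteSpace X] [SeparableSpace X] [MeasurableSpace X]
    [BorelSpace X] (hS : MeasurableHitting S) (hclosed : ∀ a, IsClosed (S a))
    (hne : ∀ a, (S a).Nonempty) : ∃ d : α → X, Measurable d ∧ ∀ a, d a ∈ S a := by
  rcases isEmpty_or_nonempty α with _ | ⟨⟨a⟩⟩
  · exact ⟨isEmptyElim, measurable_of_empty _, isEmptyElim⟩
  have : Nonempty X := (hne a).to_subtype.map Subtype.val
  obtain ⟨u, hu⟩ := exists_dense_seq X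
  choose d hd using fun a => cauchySeq_tendsto_of_complete (cauchySeq_center hu (hne a))
  refine ⟨d, measurable_of_tendsto_metrizable (measurable_center hu hS hne) ?_, fun a => ?_⟩
  · exact tendsto_pi_nhds.2 hd
  · exact mem_of_tendsto_center hu (hclosed a) (hne a) (hd a)

end Measurability

end BorelSelector

/-- For a compact Polish (here: compact metric) space X, there is a
Borel selector on the space of nonempty closed (= nonempty compact) subsets of X,
equipped with the Vietoris (= Hausdorff metric) topology. -/
theorem stmt16 {X : Type*} [MetricSpace X] [CompactSpace X]
    [MeasurableSpace X] [BorelSpace X] :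
    ∃ d : NonemptyCompacts X → X,
      @Measurable _ _ (borel (NonemptyCompacts X)) _ d ∧
      ∀ F : NonemptyCompacts X, d F ∈ (F : Set X) := by
  let := borel (NonemptyCompacts X)
  have : BorelSpace (NonemptyCompacts X) := ⟨rfl⟩
  exact BorelSelector.exists_measurable_selection
    (fun _ hC => (NonemptyCompacts.isClosed_inter_nonempty_of_isClosed hC).measurableSet)
    (fun F => F.isCompact.isClosed) (fun F => F.nonempty)
end
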